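/- For m ≥ 1 and n ≥ 0, the m-fold binomial convolution of the Cauchy numbers satisfies ∑_{k_1+⋯+k_m=n} multinomial(n; k_1,…,k_m) c_{k_1}⋯c_{k_m} = ∑_{k=0}^{n} s(n,k)·S(m+k,m)/C(m+k,m). -/

import Mathlib

open Finset

/-- Falling factorial `(θ)_n = θ(θ-1)⋯(θ-n+1)`. -/
noncomputable def fallFac (θ : ℝ) (n : ℕ) : ℝ := ∏ i ∈ Finset.range n, (θ - i)

/-- Cauchy numbers `c n = ∫_0^1 (θ)_n dθ`. -/
noncomputable def cauchy (n : ℕ) : ℝ := ∫ θ in (0:ℝ)..1, fallFac θ n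

/-- Signed Stirling numbers of the first kind. -/
noncomputable def stirlingFst (n k : ℕ) : ℝ := (descPochhammer ℝ n).coeff k

/-- Stirling numbers of the second kind. -/
def stirlingSnd : ℕ → ℕ → ℕ
  | 0, 0 => 1
  | 0, _ + 1 => 0
  | _ + 1, 0 => 0
  | n + 1, k + 1 => (k + 1) * stirlingSnd n (k + 1) + stirlingSnd n k

/-!
Write `A f (y) = ∫₀¹ f (y + θ) dθ`. If a sequence of functions is of binomial type,
`p n (x + y) = ∑ C(n, a) p a x p b y`, then integrating in one variable shows that `A` acts on it
by binomial convolution with its moments `∫₀¹ p k`, so `Aᵐ (p n) 0` is the `m`-fold binomial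
convolution of the moments. Falling factorials are of binomial type with moments `c k`, powers are
of binomial type with moments `1 / (k + 1)`, and `(θ)ₙ = ∑ s(n, k) θᵏ`; since `Aᵐ` is linear, the
theorem reduces to `∑_{k₁+⋯+k_m=k} multinomial(k; k₁,…,k_m) ∏ 1/(kᵢ+1) = S(m+k, m) / C(m+k, m)`,
which follows by induction on `m` from `S(n+1, k+1) = ∑ᵢ C(n, i) S(i, k)`.
-/

theorem Nat.choose_add_mul_choose (a b c : ℕ) :
    (a + b + c).choose (a + b) * (a + b).choose a = (a + b + c).choose a * (b + c).choose b := by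
  rw [Nat.choose_mul (Nat.le_add_right a b)]
  congr 2 <;> omega

theorem Nat.multinomial_univ_fin_cons {m : ℕ} (a : ℕ) (k : Fin m → ℕ) :
    Nat.multinomial univ (Fin.cons a k : Fin (m + 1) → ℕ) =
      (a + ∑ i, k i).choose a * Nat.multinomial univ k := by
  rw [Fin.univ_succ, Nat.multinomial_cons]
  simp [Nat.multinomial, sum_map, prod_map]

theorem Finset.Nat.sum_antidiagonalTuple_succ {M : Type*} [AddCommMonoid M] (m n : ℕ)
    (g : (Fin (m + 1) → ℕ) → M) :
    ∑ t ∈ antidiagonalTuple (m + 1) n, g t =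
      ∑ p ∈ antidiagonal n, ∑ k ∈ antidiagonalTuple m p.2, g (Fin.cons p.1 k) := by
  -- `antidiagonalTuple (m + 1) n` is defined on lists by exactly this `flatMap` over `antidiagonal n`
  change (Multiset.map g (↑(List.Nat.antidiagonalTuple (m + 1) n) : Multiset _)).sum =
    (Multiset.map _ (↑(List.Nat.antidiagonal n) : Multiset (ℕ × ℕ))).sum
  simp [List.Nat.antidiagonalTuple, List.flatMap, List.map_flatten, List.sum_flatten,
    sum_eq_multiset_sum, antidiagonalTuple, Multiset.Nat.antidiagonalTuple, Function.comp_def]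

theorem Nat.stirlingSecond_succ_succ_eq_sum (n k : ℕ) :
    stirlingSecond (n + 1) (k + 1) = ∑ i ∈ range (n + 1), n.choose i * stirlingSecond i k := by
  induction n generalizing k with
  | zero => simp [stirlingSecond_succ_succ]
  | succ n ih =>
    have pascal := sum_choose_succ_mul (fun i _ => stirlingSecond i k) n
    simp only [Nat.cast_id] at pascal
    rw [pascal, ← ih]
    cases k with
    | zero => simp [stirlingSecond_succ_succ]
    | succ k =>
      have shifted : ∑ i ∈ range (n + 1), n.choose i * stirlingSecond (i + 1) (k + 1) =
          (k + 1) * stirlingSecond (n + 1) (k + 2) + stirlingSecond (n + 1) (k + 1) := by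
        rw [ih, ih, mul_sum, ← sum_add_distrib]
        refine sum_congr rfl fun i _ => ?_
        rw [stirlingSecond_succ_succ]
        ring
      rw [shifted, stirlingSecond_succ_succ (n + 1) (k + 1)]
      ring

theorem Nat.sum_range_choose_add_mul_stirlingSecond (m k : ℕ) :
    ∑ b ∈ range (k + 1), (m + k + 1).choose (m + b) * stirlingSecond (m + b) m =
      (m + 1) * stirlingSecond (m + k + 1) (m + 1) := by
  have h := stirlingSecond_succ_succ_eq_sum (m + k + 1) m
  rw [stirlingSecond_succ_succ, show m + k + 1 + 1 = m + (k + 1 + 1) by ring, sum_range_add,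
    sum_range_succ, sum_eq_zero fun i hi => by
      rw [stirlingSecond_eq_zero_of_lt (mem_range.1 hi), mul_zero],
    show m + (k + 1) = m + k + 1 by ring, Nat.choose_self] at h
  omega

theorem stirlingSnd_eq_stirlingSecond : stirlingSnd = Nat.stirlingSecond := by
  funext n k
  induction n generalizing k with
  | zero => cases k <;> rfl
  | succ n ih => cases k <;> simp [stirlingSnd, Nat.stirlingSecond_succ_succ, ih]

section Convolution

variable {R : Type*} [CommSemiring R]

def binomConv (f g : ℕ → R) (n : ℕ) : R :=
  ∑ p ∈ antidiagonal n, (n.choose p.1 : R) * f p.1 * g p.2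

theorem binomConv_comm (f g : ℕ → R) : binomConv f g = binomConv g f := by
  ext n
  rw [binomConv, binomConv, ← Nat.sum_antidiagonal_swap]
  refine sum_congr rfl fun p hp => ?_
  rw [Nat.choose_symm_of_eq_add (HasAntidiagonal.mem_antidiagonal.1 hp).symm, Prod.fst_swap,
    Prod.snd_swap]
  ring

theorem binomConv_assoc (f g h : ℕ → R) :
    binomConv (binomConv f g) h = binomConv f (binomConv g h) := by
  ext n
  simp only [binomConv, sum_mul, mul_sum, sum_sigma']
  refine sum_nbij' (fun ⟨⟨_, j⟩, ⟨k, l⟩⟩ ↦ ⟨(k, l + j), (l, j)⟩)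
    (fun ⟨⟨i, _⟩, ⟨k, l⟩⟩ ↦ ⟨(i + k, l), (i, k)⟩) ?_ ?_ ?_ ?_ ?_
  rotate_right
  · rintro ⟨⟨i, j⟩, ⟨k, l⟩⟩ hx
    simp only [mem_sigma, HasAntidiagonal.mem_antidiagonal] at hx
    obtain ⟨rfl, rfl⟩ := hx
    dsimp only
    calc _ = (((k + l + j).choose (k + l) * (k + l).choose k : ℕ) : R) * (f k * g l * h j) := by
          push_cast; ring
      _ = (((k + l + j).choose k * (l + j).choose l : ℕ) : R) * (f k * g l * h j) := by
          rw [Nat.choose_add_mul_choose]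
      _ = _ := by simp only [add_assoc]; push_cast; ring
  all_goals aesop (add simp add_assoc)

theorem binomConv_ite_zero (f : ℕ → R) (n : ℕ) :
    binomConv f (fun k => if k = 0 then 1 else 0) n = f n := by
  rw [binomConv, sum_eq_single (n, 0)] <;> aesop

def multinomialConv (m : ℕ) (c : ℕ → R) (n : ℕ) : R :=
  ∑ k ∈ Nat.antidiagonalTuple m n, (Nat.multinomial univ k : R) * ∏ i, c (k i)

theorem multinomialConv_zero (c : ℕ → R) :
    multinomialConv 0 c = fun n => if n = 0 then 1 else 0 := by
  ext n
  cases n <;> simp [multinomialConv]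

theorem multinomialConv_succ (m : ℕ) (c : ℕ → R) :
    multinomialConv (m + 1) c = binomConv c (multinomialConv m c) := by
  ext n
  rw [multinomialConv, Nat.sum_antidiagonalTuple_succ, binomConv]
  refine sum_congr rfl fun p hp => ?_
  rw [multinomialConv, mul_sum]
  refine sum_congr rfl fun k hk => ?_
  rw [Nat.mem_antidiagonalTuple] at hk
  rw [HasAntidiagonal.mem_antidiagonal] at hp
  rw [Nat.multinomial_univ_fin_cons, Fin.prod_univ_succ, hk, hp]
  simp only [Fin.cons_zero, Fin.cons_succ]
  push_cast
  ring

end Convolution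

theorem choose_div_choose_mul_succ (m a b : ℕ) :
    ((a + b).choose a : ℝ) / ((m + a).choose m * (b + 1)) =
      (m + a + b + 1).choose (m + a) / ((m + 1) * (m + a + b + 1).choose (m + 1)) := by
  rw [Nat.cast_add_choose, Nat.cast_add_choose,
    Nat.cast_choose ℝ (by omega : m + a ≤ m + a + b + 1),
    Nat.cast_choose ℝ (by omega : m + 1 ≤ m + a + b + 1),
    show m + a + b + 1 - (m + a) = b + 1 by omega, show m + a + b + 1 - (m + 1) = a + b by omega]
  push_cast [Nat.factorial_succ]
  field_simp

theorem multinomialConv_inv_add_one (m k : ℕ) :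
    multinomialConv m (fun j => ((j : ℝ) + 1)⁻¹) k =
      (Nat.stirlingSecond (m + k) m : ℝ) / ((m + k).choose m : ℝ) := by
  induction m generalizing k with
  | zero => cases k <;> simp [multinomialConv_zero]
  | succ m ih =>
    rw [multinomialConv_succ, binomConv_comm, binomConv]
    calc _ = ∑ p ∈ antidiagonal k,
          ((m + k + 1).choose (m + p.1) * Nat.stirlingSecond (m + p.1) m : ℕ) /
            ((m + 1) * (m + k + 1).choose (m + 1) : ℝ) := by
          refine sum_congr rfl fun p hp => ?_
          have key := choose_div_choose_mul_succ m p.1 p.2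
          rw [add_assoc m p.1 p.2, HasAntidiagonal.mem_antidiagonal.1 hp] at key
          calc _ = (Nat.stirlingSecond (m + p.1) m : ℝ) *
                ((k.choose p.1 : ℝ) / ((m + p.1).choose m * (p.2 + 1))) := by
                rw [ih, ← div_div]; ring
            _ = _ := by rw [key]; push_cast; ring
      _ = _ := by
        rw [← sum_div, ← Nat.cast_sum, Nat.sum_antidiagonal_eq_sum_range_succ_mk,
          Nat.sum_range_choose_add_mul_stirlingSecond, show m + 1 + k = m + k + 1 by ring]
        push_cast
        rw [mul_div_mul_left _ _ (by positivity)]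

theorem intervalIntegral.integral_binomConv {a b : ℝ} (f : ℕ → ℝ) (g : ℕ → ℝ → ℝ)
    (hg : ∀ k, IntervalIntegrable (g k) MeasureTheory.volume a b) (n : ℕ) :
    ∫ x in a..b, binomConv f (fun k => g k x) n = binomConv f (fun k => ∫ x in a..b, g k x) n := by
  simp only [binomConv]
  rw [intervalIntegral.integral_finsetSum fun p _ => (hg p.2).const_mul _]
  simp only [intervalIntegral.integral_const_mul]

noncomputable def shiftAvg : C(ℝ, ℝ) →ₗ[ℝ] C(ℝ, ℝ) where
  toFun f := ⟨fun y => ∫ θ in (0 : ℝ)..1, f (y + θ),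
    intervalIntegral.continuous_parametric_intervalIntegral_of_continuous' (by fun_prop) 0 1⟩
  map_add' f g := by
    ext y
    exact intervalIntegral.integral_add
      ((by fun_prop : Continuous fun θ => f (y + θ)).intervalIntegrable _ _)
      ((by fun_prop : Continuous fun θ => g (y + θ)).intervalIntegrable _ _)
  map_smul' a f := by
    ext y
    exact intervalIntegral.integral_const_mul a _

theorem shiftAvg_apply (f : C(ℝ, ℝ)) (y : ℝ) :
    shiftAvg f y = ∫ θ in (0 : ℝ)..1, f (y + θ) := rfl

def IsBinomialType (p : ℕ → C(ℝ, ℝ)) : Prop :=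
  ∀ n x y, p n (x + y) = binomConv (fun k => p k x) (fun k => p k y) n

namespace IsBinomialType

variable {p : ℕ → C(ℝ, ℝ)}

theorem shiftAvg_apply (hp : IsBinomialType p) (n : ℕ) (y : ℝ) :
    shiftAvg (p n) y = binomConv (fun k => p k y) (fun k => ∫ θ in (0 : ℝ)..1, p k θ) n := by
  simp only [_root_.shiftAvg_apply, hp n y]
  exact intervalIntegral.integral_binomConv _ _ (fun k => (p k).continuous.intervalIntegrable _ _) n

theorem shiftAvg_pow_apply (hp : IsBinomialType p) (m n : ℕ) (y : ℝ) :
    (shiftAvg ^ m) (p n) y =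
      binomConv (multinomialConv m fun k => ∫ θ in (0 : ℝ)..1, p k θ) (fun k => p k y) n := by
  induction m generalizing y with
  | zero =>
    rw [pow_zero, Module.End.one_apply, multinomialConv_zero, binomConv_comm, binomConv_ite_zero]
  | succ m ih =>
    rw [pow_succ', Module.End.mul_apply, _root_.shiftAvg_apply]
    simp only [ih]
    rw [intervalIntegral.integral_binomConv _ (fun k θ => p k (y + θ))
      (fun k => (by fun_prop : Continuous _).intervalIntegrable _ _)]
    simp only [← _root_.shiftAvg_apply, hp.shiftAvg_apply]
    rw [multinomialConv_succ, binomConv_comm _ (multinomialConv m _), binomConv_assoc,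
      binomConv_comm (fun k => p k y)]

theorem shiftAvg_pow_apply_zero (hp : IsBinomialType p)
    (hp₀ : ∀ k, p k 0 = if k = 0 then 1 else 0) (m n : ℕ) :
    (shiftAvg ^ m) (p n) 0 = multinomialConv m (fun k => ∫ θ in (0 : ℝ)..1, p k θ) n := by
  simp only [hp.shiftAvg_pow_apply, hp₀, binomConv_ite_zero]

end IsBinomialType

theorem fallFac_eq_eval_descPochhammer (θ : ℝ) (n : ℕ) :
    fallFac θ n = (descPochhammer ℝ n).eval θ :=
  (descPochhammer_eval_eq_prod_range n θ).symm

noncomputable def fallFacCM (n : ℕ) : C(ℝ, ℝ) :=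
  ⟨(fallFac · n), by
    simpa only [fallFac_eq_eval_descPochhammer] using (descPochhammer ℝ n).continuous⟩

noncomputable def powCM (n : ℕ) : C(ℝ, ℝ) := ⟨(· ^ n), continuous_pow n⟩

theorem isBinomialType_fallFacCM : IsBinomialType fallFacCM := by
  intro n x y
  have h := Ring.descPochhammer_smeval_add n (Commute.all x y)
  simp only [← Polynomial.aeval_eq_smeval, Polynomial.aeval_def, ← Polynomial.eval_map,
    descPochhammer_map] at h
  simpa [fallFacCM, fallFac_eq_eval_descPochhammer, binomConv, mul_assoc] using h

theorem isBinomialType_powCM : IsBinomialType powCM := by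
  intro n x y
  simp only [powCM, ContinuousMap.coe_mk, add_pow, binomConv,
    Nat.sum_antidiagonal_eq_sum_range_succ_mk]
  refine sum_congr rfl fun i _ => ?_
  ring

theorem fallFacCM_apply_zero (n : ℕ) : fallFacCM n 0 = if n = 0 then 1 else 0 :=
  (fallFac_eq_eval_descPochhammer 0 n).trans (descPochhammer_eval_zero ℝ)

theorem powCM_apply_zero (n : ℕ) : powCM n 0 = if n = 0 then 1 else 0 :=
  zero_pow_eq n

theorem integral_powCM (n : ℕ) : ∫ θ in (0 : ℝ)..1, powCM n θ = ((n : ℝ) + 1)⁻¹ := by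
  simp [powCM, integral_pow]

theorem fallFacCM_eq_sum (n : ℕ) :
    fallFacCM n = ∑ k ∈ range (n + 1), stirlingFst n k • powCM k := by
  ext θ
  simp [fallFacCM, powCM, fallFac_eq_eval_descPochhammer, stirlingFst,
    Polynomial.eval_eq_sum_range, descPochhammer_natDegree]

theorem cauchy_mfold_convolution_general (m : ℕ) (n : ℕ) :
    ∑ k ∈ Finset.Nat.antidiagonalTuple m n,
        (Nat.multinomial Finset.univ k : ℝ) * ∏ i, cauchy (k i) =
      ∑ k ∈ Finset.range (n + 1),
        stirlingFst n k * (stirlingSnd (m + k) m : ℝ) / ((m + k).choose m : ℝ) := by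
  calc _ = (shiftAvg ^ m) (fallFacCM n) 0 :=
        (isBinomialType_fallFacCM.shiftAvg_pow_apply_zero fallFacCM_apply_zero m n).symm
    _ = ∑ k ∈ range (n + 1), stirlingFst n k * (shiftAvg ^ m) (powCM k) 0 := by
        simp [fallFacCM_eq_sum]
    _ = _ := by
        simp only [isBinomialType_powCM.shiftAvg_pow_apply_zero powCM_apply_zero, integral_powCM,
          multinomialConv_inv_add_one, stirlingSnd_eq_stirlingSecond, mul_div_assoc]

theorem cauchy_mfold_convolution (m : ℕ) (hm : 1 ≤ m) (n : ℕ) :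
    ∑ k ∈ Finset.Nat.antidiagonalTuple m n,
        (Nat.multinomial Finset.univ k : ℝ) * ∏ i, cauchy (k i) =
      ∑ k ∈ Finset.range (n + 1),
        stirlingFst n k * (stirlingSnd (m + k) m : ℝ) / ((m + k).choose m : ℝ) :=
  cauchy_mfold_convolution_general m n
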